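/- arXiv:2110.15006 — 3 statements merged into one kernel-verified Lean document; each statement's English description precedes it below -/
import Mathlib

section
/- Let k ∈ ℝ and let φ, c : ℝ → ℂ be such that φ is twice continuously differentiable and c is continuously differentiable on [−1,1]. Assume −φ''(x) + k² φ(x) = c'(x) for all x ∈ [−1,1], and φ(−1) = φ(1) = 0. Then (∫_{−1}^{1} |φ'(x)|² dx)^{1/2} ≤ (∫_{−1}^{1} |c(x)|² dx)^{1/2} and |k| (∫_{−1}^{1} |φ(x)|² dx)^{1/2} ≤ (∫_{−1}^{1} |c(x)|² dx)^{1/2}; in particular ‖φ'‖_{L²(−1,1)} + |k| ‖φ‖_{L²(−1,1)} ≤ 2 ‖c‖_{L²(−1,1)}. -/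
open MeasureTheory Real

/-- Cauchy–Schwarz for interval integrals of continuous real functions. -/
lemma cs_aux {f g : ℝ → ℝ} (hf : Continuous f) (hg : Continuous g) :
    ∫ x in (-1:ℝ)..1, f x * g x ≤
      Real.sqrt (∫ x in (-1:ℝ)..1, f x ^ 2) * Real.sqrt (∫ x in (-1:ℝ)..1, g x ^ 2) := by
  set A := ∫ x in (-1:ℝ)..1, f x ^ 2 with hA
  set B := ∫ x in (-1:ℝ)..1, g x ^ 2 with hB
  set S := ∫ x in (-1:ℝ)..1, f x * g x with hS
  have hle : (-1:ℝ) ≤ 1 := by norm_num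
  have hAnn : 0 ≤ A := intervalIntegral.integral_nonneg hle fun x _ => sq_nonneg _
  have hBnn : 0 ≤ B := intervalIntegral.integral_nonneg hle fun x _ => sq_nonneg _
  have h1 : IntervalIntegrable (fun x => f x ^ 2) volume (-1) 1 :=
    (hf.pow 2).intervalIntegrable _ _
  have h2 : IntervalIntegrable (fun x => f x * g x) volume (-1) 1 :=
    (hf.mul hg).intervalIntegrable _ _
  have h3 : IntervalIntegrable (fun x => g x ^ 2) volume (-1) 1 :=
    (hg.pow 2).intervalIntegrable _ _
  have key : ∀ t : ℝ, 0 ≤ t ^ 2 * A - 2 * t * S + B := by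
    intro t
    have h0 : 0 ≤ ∫ x in (-1:ℝ)..1, (t * f x - g x) ^ 2 :=
      intervalIntegral.integral_nonneg hle fun x _ => sq_nonneg _
    have hexp : ∫ x in (-1:ℝ)..1, (t * f x - g x) ^ 2
        = t ^ 2 * A - 2 * t * S + B := by
      have e : (fun x => (t * f x - g x) ^ 2)
          = fun x => (t ^ 2 * f x ^ 2 - 2 * t * (f x * g x)) + g x ^ 2 := by
        funext x; ring
      rw [e, intervalIntegral.integral_add ((h1.const_mul _).sub (h2.const_mul _)) h3,
        intervalIntegral.integral_sub (h1.const_mul _) (h2.const_mul _),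
        intervalIntegral.integral_const_mul, intervalIntegral.integral_const_mul]
    linarith [hexp ▸ h0]
  have hS2 : S ^ 2 ≤ A * B := by
    rcases eq_or_lt_of_le hAnn with h | h
    · -- A = 0 : show S = 0
      have hS0 : S = 0 := by
        by_contra hne
        have hk := key ((B + 1) / (2 * S))
        rw [← h] at hk
        have hfs : 2 * ((B + 1) / (2 * S)) * S = B + 1 := by
          field_simp
        nlinarith [hk, hfs]
      rw [hS0]
      simpa using mul_nonneg hAnn hBnn
    · have h1 := key (S / A)
      have h2 : (S / A) ^ 2 * A - 2 * (S / A) * S + B = B - S ^ 2 / A := by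
        field_simp; ring
      rw [h2] at h1
      have := (div_le_iff₀ h).mp (by linarith : S ^ 2 / A ≤ B)
      nlinarith [this]
  calc S ≤ |S| := le_abs_self S
    _ = Real.sqrt (S ^ 2) := (Real.sqrt_sq_eq_abs S).symm
    _ ≤ Real.sqrt (A * B) := Real.sqrt_le_sqrt hS2
    _ = Real.sqrt A * Real.sqrt B := Real.sqrt_mul hAnn B

/-- Elliptic estimate for the Dirichlet problem `−φ'' + k²φ = c'` on `[−1,1]`,
`φ(±1) = 0`: both `‖φ'‖_{L²(−1,1)} ≤ ‖c‖_{L²(−1,1)}` and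
`|k| ‖φ‖_{L²(−1,1)} ≤ ‖c‖_{L²(−1,1)}`; in particular
`‖φ'‖_{L²} + |k| ‖φ‖_{L²} ≤ 2 ‖c‖_{L²}`. -/
theorem elliptic_dirichlet_estimate (k : ℝ) (φ c : ℝ → ℂ)
    (hφ : ContDiff ℝ 2 φ) (hc : ContDiff ℝ 1 c)
    (heq : ∀ x ∈ Set.Icc (-1 : ℝ) 1,
      -(deriv (deriv φ) x) + ((k : ℂ) ^ 2) * φ x = deriv c x)
    (hb1 : φ (-1) = 0) (hb2 : φ 1 = 0) :
    Real.sqrt (∫ x in Set.Icc (-1 : ℝ) 1, ‖deriv φ x‖ ^ 2) ≤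
        Real.sqrt (∫ x in Set.Icc (-1 : ℝ) 1, ‖c x‖ ^ 2) ∧
    |k| * Real.sqrt (∫ x in Set.Icc (-1 : ℝ) 1, ‖φ x‖ ^ 2) ≤
        Real.sqrt (∫ x in Set.Icc (-1 : ℝ) 1, ‖c x‖ ^ 2) ∧
    Real.sqrt (∫ x in Set.Icc (-1 : ℝ) 1, ‖deriv φ x‖ ^ 2) +
        |k| * Real.sqrt (∫ x in Set.Icc (-1 : ℝ) 1, ‖φ x‖ ^ 2) ≤
      2 * Real.sqrt (∫ x in Set.Icc (-1 : ℝ) 1, ‖c x‖ ^ 2) := by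
  have hle : (-1:ℝ) ≤ 1 := by norm_num
  -- rewrite Icc integrals as interval integrals
  have hIcc : ∀ f : ℝ → ℝ, (∫ x in Set.Icc (-1:ℝ) 1, f x) = ∫ x in (-1:ℝ)..1, f x := by
    intro f
    rw [intervalIntegral.integral_of_le hle, MeasureTheory.integral_Icc_eq_integral_Ioc]
  rw [hIcc, hIcc, hIcc]
  set A := ∫ x in (-1:ℝ)..1, ‖deriv φ x‖ ^ 2 with hA
  set B := ∫ x in (-1:ℝ)..1, ‖φ x‖ ^ 2 with hB
  set C := ∫ x in (-1:ℝ)..1, ‖c x‖ ^ 2 with hC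
  have hAnn : 0 ≤ A := intervalIntegral.integral_nonneg hle fun x _ => sq_nonneg _
  have hBnn : 0 ≤ B := intervalIntegral.integral_nonneg hle fun x _ => sq_nonneg _
  have hCnn : 0 ≤ C := intervalIntegral.integral_nonneg hle fun x _ => sq_nonneg _
  -- regularity facts
  have hφd : Differentiable ℝ φ := hφ.differentiable (by norm_num)
  have hφ1 : ContDiff ℝ 1 (deriv φ) :=
    (contDiff_succ_iff_deriv.mp (show ContDiff ℝ (1 + 1) φ by norm_num; exact hφ)).2.2
  have hφ'd : Differentiable ℝ (deriv φ) := hφ1.differentiable (by norm_num)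
  have hφ''c : Continuous (deriv (deriv φ)) := (contDiff_one_iff_deriv.mp hφ1).2
  have hcd : Differentiable ℝ c := hc.differentiable (by norm_num)
  have hc'c : Continuous (deriv c) := (contDiff_one_iff_deriv.mp hc).2
  have hφc : Continuous φ := hφ.continuous
  have hφ'c : Continuous (deriv φ) := hφ1.continuous
  have hcc : Continuous c := hc.continuous
  have hconjφc : Continuous fun x => (starRingEnd ℂ) (φ x) := continuous_star.comp hφc
  have hconjφ'c : Continuous fun x => (starRingEnd ℂ) (deriv φ x) := continuous_star.comp hφ'c
  -- integration by parts (twice)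
  have ibp1 : (∫ x in (-1:ℝ)..1, (starRingEnd ℂ) (φ x) * deriv (deriv φ) x)
      = - ∫ x in (-1:ℝ)..1, (starRingEnd ℂ) (deriv φ x) * deriv φ x := by
    have h := intervalIntegral.integral_mul_deriv_eq_deriv_mul
      (a := (-1:ℝ)) (b := (1:ℝ))
      (u := fun y => (starRingEnd ℂ) (φ y)) (u' := fun y => (starRingEnd ℂ) (deriv φ y))
      (v := deriv φ) (v' := deriv (deriv φ))
      (fun x _ => ((hφd x).hasDerivAt).star)
      (fun x _ => (hφ'd x).hasDerivAt)
      (hconjφ'c.intervalIntegrable _ _)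
      (hφ''c.intervalIntegrable _ _)
    simpa [hb1, hb2] using h
  have ibp2 : (∫ x in (-1:ℝ)..1, (starRingEnd ℂ) (φ x) * deriv c x)
      = - ∫ x in (-1:ℝ)..1, (starRingEnd ℂ) (deriv φ x) * c x := by
    have h := intervalIntegral.integral_mul_deriv_eq_deriv_mul
      (a := (-1:ℝ)) (b := (1:ℝ))
      (u := fun y => (starRingEnd ℂ) (φ y)) (u' := fun y => (starRingEnd ℂ) (deriv φ y))
      (v := c) (v' := deriv c)
      (fun x _ => ((hφd x).hasDerivAt).star)
      (fun x _ => (hcd x).hasDerivAt)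
      (hconjφ'c.intervalIntegrable _ _)
      (hc'c.intervalIntegrable _ _)
    simpa [hb1, hb2] using h
  -- the weak formulation
  have heq' : (∫ x in (-1:ℝ)..1,
        (starRingEnd ℂ) (φ x) * (-(deriv (deriv φ) x) + (k:ℂ)^2 * φ x))
      = ∫ x in (-1:ℝ)..1, (starRingEnd ℂ) (φ x) * deriv c x := by
    apply intervalIntegral.integral_congr
    intro x hx
    rw [Set.uIcc_of_le hle] at hx
    simpa using congrArg (fun z => (starRingEnd ℂ) (φ x) * z) (heq x hx)
  -- expand the left-hand side
  have conj_mul_self : ∀ z : ℂ, (starRingEnd ℂ) z * z = ((‖z‖ ^ 2 : ℝ) : ℂ) := by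
    intro z
    rw [mul_comm, Complex.mul_conj, Complex.normSq_eq_norm_sq]
  have eA : (∫ x in (-1:ℝ)..1, (starRingEnd ℂ) (deriv φ x) * deriv φ x) = ((A : ℝ) : ℂ) := by
    rw [show (fun x => (starRingEnd ℂ) (deriv φ x) * deriv φ x)
        = fun x => ((‖deriv φ x‖ ^ 2 : ℝ) : ℂ) from funext fun x => conj_mul_self _]
    exact intervalIntegral.integral_ofReal
  have eB : (∫ x in (-1:ℝ)..1, (starRingEnd ℂ) (φ x) * φ x) = ((B : ℝ) : ℂ) := by
    rw [show (fun x => (starRingEnd ℂ) (φ x) * φ x)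
        = fun x => ((‖φ x‖ ^ 2 : ℝ) : ℂ) from funext fun x => conj_mul_self _]
    exact intervalIntegral.integral_ofReal
  have expand : (∫ x in (-1:ℝ)..1,
        (starRingEnd ℂ) (φ x) * (-(deriv (deriv φ) x) + (k:ℂ)^2 * φ x))
      = ((A : ℝ) : ℂ) + (k:ℂ)^2 * ((B : ℝ) : ℂ) := by
    have e1 : (fun x => (starRingEnd ℂ) (φ x) * (-(deriv (deriv φ) x) + (k:ℂ)^2 * φ x))
        = fun x => -((starRingEnd ℂ) (φ x) * deriv (deriv φ) x)
            + (k:ℂ)^2 * ((starRingEnd ℂ) (φ x) * φ x) := by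
      funext x; ring
    rw [e1, intervalIntegral.integral_add
        (f := fun x => -((starRingEnd ℂ) (φ x) * deriv (deriv φ) x))
        (g := fun x => (k:ℂ)^2 * ((starRingEnd ℂ) (φ x) * φ x))
        (((hconjφc.mul hφ''c).neg).intervalIntegrable _ _)
        ((continuous_const.mul (hconjφc.mul hφc)).intervalIntegrable _ _),
      intervalIntegral.integral_neg, intervalIntegral.integral_const_mul, ibp1, neg_neg,
      eA, eB]
  -- main inequality : A + k² B ≤ √A √C
  have hmain : A + k ^ 2 * B ≤ Real.sqrt A * Real.sqrt C := by
    have hz : ((A : ℝ) : ℂ) + (k:ℂ)^2 * ((B : ℝ) : ℂ)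
        = - ∫ x in (-1:ℝ)..1, (starRingEnd ℂ) (deriv φ x) * c x := by
      rw [← ibp2, ← heq', expand]
    have hre : A + k ^ 2 * B
        = (- ∫ x in (-1:ℝ)..1, (starRingEnd ℂ) (deriv φ x) * c x).re := by
      rw [← hz]
      have : ((A : ℝ) : ℂ) + (k:ℂ)^2 * ((B : ℝ) : ℂ) = (((A + k ^ 2 * B : ℝ)) : ℂ) := by
        push_cast; ring
      rw [this, Complex.ofReal_re]
    rw [hre]
    calc (- ∫ x in (-1:ℝ)..1, (starRingEnd ℂ) (deriv φ x) * c x).re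
        ≤ ‖- ∫ x in (-1:ℝ)..1, (starRingEnd ℂ) (deriv φ x) * c x‖ := Complex.re_le_norm _
      _ = ‖∫ x in (-1:ℝ)..1, (starRingEnd ℂ) (deriv φ x) * c x‖ := norm_neg _
      _ ≤ ∫ x in (-1:ℝ)..1, ‖(starRingEnd ℂ) (deriv φ x) * c x‖ :=
          intervalIntegral.norm_integral_le_integral_norm hle
      _ = ∫ x in (-1:ℝ)..1, ‖deriv φ x‖ * ‖c x‖ := by
          congr 1; funext x; rw [norm_mul, RCLike.norm_conj]
      _ ≤ Real.sqrt A * Real.sqrt C := cs_aux hφ'c.norm hcc.norm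
  -- conclude
  have h1 : Real.sqrt A ≤ Real.sqrt C := by
    have hAle : A ≤ Real.sqrt A * Real.sqrt C := by nlinarith [mul_nonneg (sq_nonneg k) hBnn]
    rcases eq_or_lt_of_le (Real.sqrt_nonneg A) with h0 | h0
    · rw [← h0]; exact Real.sqrt_nonneg C
    · have : Real.sqrt A * Real.sqrt A ≤ Real.sqrt A * Real.sqrt C := by
        rw [Real.mul_self_sqrt hAnn]; exact hAle
      exact le_of_mul_le_mul_left this h0
  have h2 : |k| * Real.sqrt B ≤ Real.sqrt C := by
    have hsq : (|k| * Real.sqrt B) ^ 2 ≤ Real.sqrt C ^ 2 := by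
      have e1 : (|k| * Real.sqrt B) ^ 2 = k ^ 2 * B := by
        rw [mul_pow, sq_abs, Real.sq_sqrt hBnn]
      have e2 : Real.sqrt C ^ 2 = C := Real.sq_sqrt hCnn
      rw [e1, e2]
      have : Real.sqrt A * Real.sqrt C ≤ C := by
        have := mul_le_mul_of_nonneg_right h1 (Real.sqrt_nonneg C)
        rwa [Real.mul_self_sqrt hCnn] at this
      nlinarith [hmain, hAnn]
    have hx : 0 ≤ |k| * Real.sqrt B := mul_nonneg (abs_nonneg k) (Real.sqrt_nonneg B)
    calc |k| * Real.sqrt B = Real.sqrt ((|k| * Real.sqrt B) ^ 2) := (Real.sqrt_sq hx).symm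
      _ ≤ Real.sqrt (Real.sqrt C ^ 2) := Real.sqrt_le_sqrt hsq
      _ = Real.sqrt C := Real.sqrt_sq (Real.sqrt_nonneg C)
  exact ⟨h1, h2, by linarith⟩
end

section
/- Let k ∈ ℝ and let φ, g : ℝ → ℂ with φ twice continuously differentiable and g continuous on [−1,1]. Assume −φ''(x) + k² φ(x) = g(x) for all x ∈ [−1,1], and φ(−1) = φ(1) = 0. Then ‖φ''‖_{L²(−1,1)} + |k| ‖φ'‖_{L²(−1,1)} + k² ‖φ‖_{L²(−1,1)} ≤ 4 ‖g‖_{L²(−1,1)}. -/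
open MeasureTheory Real

lemma cs_Icc (u v : ℝ → ℝ) (hu : ContinuousOn u (Set.Icc (-1:ℝ) 1))
    (hv : ContinuousOn v (Set.Icc (-1:ℝ) 1))
    (hu0 : ∀ x ∈ Set.Icc (-1:ℝ) 1, 0 ≤ u x) (hv0 : ∀ x ∈ Set.Icc (-1:ℝ) 1, 0 ≤ v x) :
    ∫ x in Set.Icc (-1:ℝ) 1, u x * v x ≤
      Real.sqrt (∫ x in Set.Icc (-1:ℝ) 1, u x ^ 2) *
        Real.sqrt (∫ x in Set.Icc (-1:ℝ) 1, v x ^ 2) := by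
  have hmem : ∀ (w : ℝ → ℝ), ContinuousOn w (Set.Icc (-1:ℝ) 1) →
      MemLp w (ENNReal.ofReal 2) (volume.restrict (Set.Icc (-1:ℝ) 1)) := by
    intro w hw
    obtain ⟨C, hC⟩ := (isCompact_Icc : IsCompact (Set.Icc (-1:ℝ) 1)).exists_bound_of_continuousOn hw
    refine MemLp.of_bound (hw.aestronglyMeasurable measurableSet_Icc) C ?_
    exact (ae_restrict_iff' measurableSet_Icc).2 (Filter.Eventually.of_forall hC)
  have h := MeasureTheory.integral_mul_le_Lp_mul_Lq_of_nonneg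
    Real.HolderConjugate.two_two (μ := volume.restrict (Set.Icc (-1:ℝ) 1))
    (f := u) (g := v)
    ((ae_restrict_iff' measurableSet_Icc).2 (Filter.Eventually.of_forall hu0))
    ((ae_restrict_iff' measurableSet_Icc).2 (Filter.Eventually.of_forall hv0))
    (hmem u hu) (hmem v hv)
  simpa [Real.sqrt_eq_rpow, Real.rpow_natCast] using h

set_option maxHeartbeats 1600000 in
/-- Full elliptic regularity estimate for the Dirichlet problem
`−φ'' + k²φ = g` on `[−1,1]`, `φ(±1) = 0`:
`‖φ''‖_{L²(−1,1)} + |k| ‖φ'‖_{L²(−1,1)} + k² ‖φ‖_{L²(−1,1)} ≤ 4 ‖g‖_{L²(−1,1)}`. -/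
theorem elliptic_dirichlet_regularity (k : ℝ) (φ g : ℝ → ℂ)
    (hφ : ContDiff ℝ 2 φ) (hg : ContinuousOn g (Set.Icc (-1 : ℝ) 1))
    (heq : ∀ x ∈ Set.Icc (-1 : ℝ) 1,
      -(deriv (deriv φ) x) + ((k : ℂ) ^ 2) * φ x = g x)
    (hb1 : φ (-1) = 0) (hb2 : φ 1 = 0) :
    Real.sqrt (∫ x in Set.Icc (-1 : ℝ) 1, ‖deriv (deriv φ) x‖ ^ 2) +
        |k| * Real.sqrt (∫ x in Set.Icc (-1 : ℝ) 1, ‖deriv φ x‖ ^ 2) +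
        k ^ 2 * Real.sqrt (∫ x in Set.Icc (-1 : ℝ) 1, ‖φ x‖ ^ 2) ≤
      4 * Real.sqrt (∫ x in Set.Icc (-1 : ℝ) 1, ‖g x‖ ^ 2) := by
  obtain ⟨hd1, hc1⟩ := (contDiff_succ_iff_deriv (n := 1)).mp (by exact_mod_cast hφ)
  have hc1' := hc1.2
  obtain ⟨hd2, hc2⟩ := (contDiff_succ_iff_deriv (n := 0)).mp (by exact_mod_cast hc1')
  have hcφ : Continuous φ := hφ.continuous
  have hcφ' : Continuous (deriv φ) := hc1'.continuous
  have hcφ'' : Continuous (deriv (deriv φ)) := hc2.2.continuous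
  have conv : ∀ (f : ℝ → ℝ), (∫ x in Set.Icc (-1:ℝ) 1, f x) = ∫ x in (-1:ℝ)..1, f x := by
    intro f
    rw [intervalIntegral.integral_of_le (by norm_num), MeasureTheory.integral_Icc_eq_integral_Ioc]
  set A := ∫ x in Set.Icc (-1:ℝ) 1, ‖deriv φ x‖ ^ 2 with hA
  set B := ∫ x in Set.Icc (-1:ℝ) 1, ‖φ x‖ ^ 2 with hB
  set G := ∫ x in Set.Icc (-1:ℝ) 1, ‖g x‖ ^ 2 with hG
  set C := ∫ x in Set.Icc (-1:ℝ) 1, ‖deriv (deriv φ) x‖ ^ 2 with hC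
  have hA0 : 0 ≤ A := setIntegral_nonneg measurableSet_Icc (fun x _ => sq_nonneg _)
  have hB0 : 0 ≤ B := setIntegral_nonneg measurableSet_Icc (fun x _ => sq_nonneg _)
  have hG0 : 0 ≤ G := setIntegral_nonneg measurableSet_Icc (fun x _ => sq_nonneg _)
  set a := Real.sqrt A with ha
  set b := Real.sqrt B with hb
  set gn := Real.sqrt G with hgn
  have ha0 : 0 ≤ a := Real.sqrt_nonneg _
  have hb0 : 0 ≤ b := Real.sqrt_nonneg _
  have hgn0 : 0 ≤ gn := Real.sqrt_nonneg _
  have ha2 : a ^ 2 = A := Real.sq_sqrt hA0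
  have hb2' : b ^ 2 = B := Real.sq_sqrt hB0
  have hgn2 : gn ^ 2 = G := Real.sq_sqrt hG0
  clear_value A B G C a b gn
  -- Energy identity
  have energy : ((A : ℂ)) + (k:ℂ)^2 * (B : ℂ)
      = ∫ x in (-1:ℝ)..1, g x * (starRingEnd ℂ) (φ x) := by
    rw [hA, hB, conv, conv]
    have key : ∀ x : ℝ, HasDerivAt (fun y => deriv φ y * (starRingEnd ℂ) (φ y))
        (deriv (deriv φ) x * (starRingEnd ℂ) (φ x)
          + deriv φ x * (starRingEnd ℂ) (deriv φ x)) x := by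
      intro x
      exact ((hd2 x).hasDerivAt).mul ((hd1 x).hasDerivAt).star
    have hint1 : IntervalIntegrable
        (fun x => deriv (deriv φ) x * (starRingEnd ℂ) (φ x)) volume (-1) 1 :=
      (hcφ''.mul (Complex.continuous_conj.comp hcφ)).intervalIntegrable _ _
    have hint2 : IntervalIntegrable
        (fun x => deriv φ x * (starRingEnd ℂ) (deriv φ x)) volume (-1) 1 :=
      (hcφ'.mul (Complex.continuous_conj.comp hcφ')).intervalIntegrable _ _
    have hFTC := intervalIntegral.integral_eq_sub_of_hasDerivAt
      (a := -1) (b := 1) (fun x _ => key x) (hint1.add hint2)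
    rw [hb1, hb2] at hFTC
    simp only [map_zero, mul_zero, sub_zero] at hFTC
    rw [intervalIntegral.integral_add hint1 hint2] at hFTC
    have e2 : (∫ x in (-1:ℝ)..1, deriv φ x * (starRingEnd ℂ) (deriv φ x))
        = ((∫ x in (-1:ℝ)..1, ‖deriv φ x‖^2 : ℝ) : ℂ) := by
      rw [← intervalIntegral.integral_ofReal]
      congr 1; ext x
      rw [Complex.mul_conj']; push_cast; ring
    have e1 : (∫ x in (-1:ℝ)..1, deriv (deriv φ) x * (starRingEnd ℂ) (φ x))
        = (k:ℂ)^2 * ((∫ x in (-1:ℝ)..1, ‖φ x‖^2 : ℝ) : ℂ)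
          - ∫ x in (-1:ℝ)..1, g x * (starRingEnd ℂ) (φ x) := by
      have e0 : (∫ x in (-1:ℝ)..1, deriv (deriv φ) x * (starRingEnd ℂ) (φ x))
          = ∫ x in (-1:ℝ)..1,
              ((k:ℂ)^2 * (φ x * (starRingEnd ℂ) (φ x)) - g x * (starRingEnd ℂ) (φ x)) := by
        apply intervalIntegral.integral_congr
        intro x hx
        rw [Set.uIcc_of_le (by norm_num : (-1:ℝ) ≤ 1)] at hx
        have h := heq x hx
        have h2 : deriv (deriv φ) x = (k:ℂ)^2 * φ x - g x := by linear_combination -h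
        show deriv (deriv φ) x * (starRingEnd ℂ) (φ x) = _
        rw [h2]; ring
      rw [e0, intervalIntegral.integral_sub, intervalIntegral.integral_const_mul]
      · congr 2
        rw [← intervalIntegral.integral_ofReal]
        congr 1; ext x
        rw [Complex.mul_conj']; push_cast; ring
      · exact (continuous_const.mul
          (hcφ.mul (Complex.continuous_conj.comp hcφ))).intervalIntegrable _ _
      · apply ContinuousOn.intervalIntegrable
        rw [Set.uIcc_of_le (by norm_num : (-1:ℝ) ≤ 1)]
        exact hg.mul ((Complex.continuous_conj.comp hcφ).continuousOn)
    rw [e1, e2] at hFTC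
    linear_combination hFTC
  -- energy inequality : A + k^2 * B ≤ gn * b
  have henergy : A + k^2 * B ≤ gn * b := by
    have h1 : A + k^2 * B = ‖((A : ℂ)) + (k:ℂ)^2 * (B : ℂ)‖ := by
      have : ((A : ℂ)) + (k:ℂ)^2 * (B : ℂ) = ((A + k^2 * B : ℝ) : ℂ) := by push_cast; ring
      rw [this, Complex.norm_real, Real.norm_of_nonneg (by positivity)]
    have h2 : ‖∫ x in (-1:ℝ)..1, g x * (starRingEnd ℂ) (φ x)‖
        ≤ ∫ x in (-1:ℝ)..1, ‖g x * (starRingEnd ℂ) (φ x)‖ :=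
      intervalIntegral.norm_integral_le_integral_norm (by norm_num)
    have h3 : (∫ x in (-1:ℝ)..1, ‖g x * (starRingEnd ℂ) (φ x)‖)
        = ∫ x in Set.Icc (-1:ℝ) 1, ‖g x‖ * ‖φ x‖ := by
      rw [conv]
      congr 1; ext x
      rw [norm_mul, RCLike.norm_conj]
    have h4 : (∫ x in Set.Icc (-1:ℝ) 1, ‖g x‖ * ‖φ x‖) ≤ gn * b := by
      rw [hgn, hb, hG, hB]
      exact cs_Icc _ _ hg.norm hcφ.norm.continuousOn
        (fun x _ => norm_nonneg _) (fun x _ => norm_nonneg _)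
    calc A + k^2 * B = ‖((A : ℂ)) + (k:ℂ)^2 * (B : ℂ)‖ := h1
      _ = ‖∫ x in (-1:ℝ)..1, g x * (starRingEnd ℂ) (φ x)‖ := by rw [energy]
      _ ≤ ∫ x in (-1:ℝ)..1, ‖g x * (starRingEnd ℂ) (φ x)‖ := h2
      _ = ∫ x in Set.Icc (-1:ℝ) 1, ‖g x‖ * ‖φ x‖ := h3
      _ ≤ gn * b := h4
  -- Poincaré : b ≤ 2 * a
  have hpoin : b ≤ 2 * a := by
    have hbd : ∀ x ∈ Set.Icc (-1:ℝ) 1, ‖φ x‖ ≤ Real.sqrt 2 * a := by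
      intro x hx
      have hftc := intervalIntegral.integral_eq_sub_of_hasDerivAt
        (a := -1) (b := x) (f := φ) (f' := deriv φ)
        (fun t _ => (hd1 t).hasDerivAt) (hcφ'.intervalIntegrable _ _)
      rw [hb1, sub_zero] at hftc
      calc ‖φ x‖ = ‖∫ t in (-1:ℝ)..x, deriv φ t‖ := by rw [hftc]
        _ ≤ ∫ t in (-1:ℝ)..x, ‖deriv φ t‖ :=
            intervalIntegral.norm_integral_le_integral_norm hx.1
        _ ≤ ∫ t in (-1:ℝ)..1, ‖deriv φ t‖ := by
            apply intervalIntegral.integral_mono_interval le_rfl hx.1 hx.2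
            · exact Filter.Eventually.of_forall (fun t => norm_nonneg _)
            · exact (hcφ'.norm).intervalIntegrable _ _
        _ = ∫ t in Set.Icc (-1:ℝ) 1, ‖deriv φ t‖ * 1 := by
            rw [conv]; simp
        _ ≤ Real.sqrt A * Real.sqrt (∫ t in Set.Icc (-1:ℝ) 1, (1:ℝ)^2) := by
            rw [hA]
            exact cs_Icc _ _ hcφ'.norm.continuousOn continuousOn_const
              (fun t _ => norm_nonneg _) (fun t _ => zero_le_one)
        _ = Real.sqrt 2 * a := by
            rw [ha, mul_comm]
            congr 2
            rw [one_pow, setIntegral_const, Real.volume_real_Icc, smul_eq_mul]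
            norm_num
    have hB4A : B ≤ 4 * A := by
      have : B ≤ ∫ x in Set.Icc (-1:ℝ) 1, 2 * A := by
        rw [hB]
        apply setIntegral_mono_on
        · exact (hcφ.norm.pow 2).integrableOn_Icc
        · exact integrableOn_const (by simp [Real.volume_Icc])
        · exact measurableSet_Icc
        · intro x hx
          have h := hbd x hx
          have := sq_le_sq' (by nlinarith [norm_nonneg (φ x), Real.sqrt_nonneg 2]) h
          calc ‖φ x‖^2 ≤ (Real.sqrt 2 * a)^2 := this
            _ = 2 * A := by rw [mul_pow, Real.sq_sqrt (by norm_num : (0:ℝ) ≤ 2), ha2]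
      have hconst : (∫ _x in Set.Icc (-1:ℝ) 1, (2 * A : ℝ)) = 4 * A := by
        rw [setIntegral_const, Real.volume_real_Icc, smul_eq_mul]
        norm_num
        ring
      linarith [this, hconst.le]
    nlinarith [ha2, hb2', hB4A, ha0, hb0, sq_nonneg (2*a - b), sq_nonneg (2*a + b),
      mul_nonneg ha0 hb0]
  -- k^2 * b ≤ gn
  have hk2b : k^2 * b ≤ gn := by
    rcases eq_or_lt_of_le hb0 with h | h
    · rw [← h]; simpa using hgn0
    · have h2 : (k^2 * b) * b ≤ gn * b := by nlinarith [hA0, hb2']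
      exact (mul_le_mul_iff_left₀ h).1 h2
  -- |k| * a ≤ gn
  have hka : |k| * a ≤ gn := by
    have hAle : A ≤ gn * b := by nlinarith [mul_nonneg (sq_nonneg k) hB0]
    have h1 : k^2 * A ≤ k^2 * (gn * b) := mul_le_mul_of_nonneg_left hAle (sq_nonneg k)
    have h2 : k^2 * (gn * b) ≤ gn * gn := by nlinarith [mul_le_mul_of_nonneg_left hk2b hgn0]
    have h3 : (|k| * a)^2 ≤ gn^2 := by
      rw [mul_pow, sq_abs, ha2]; nlinarith
    have h4 := Real.sqrt_le_sqrt h3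
    rwa [Real.sqrt_sq (by positivity), Real.sqrt_sq hgn0] at h4
  -- sqrt C ≤ k^2 * b + gn
  have hsc : Real.sqrt C ≤ k^2 * b + gn := by
    have hCb : C ≤ (k^2 * b + gn)^2 := by
      have hmaj : C ≤ ∫ x in Set.Icc (-1:ℝ) 1,
          (k^4 * ‖φ x‖^2 + 2 * k^2 * (‖φ x‖ * ‖g x‖) + ‖g x‖^2) := by
        rw [hC]
        apply setIntegral_mono_on
        · exact (hcφ''.norm.pow 2).integrableOn_Icc
        · apply ContinuousOn.integrableOn_compact isCompact_Icc
          apply ContinuousOn.add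
          apply ContinuousOn.add
          · exact continuousOn_const.mul ((hcφ.norm.pow 2).continuousOn)
          · exact continuousOn_const.mul (hcφ.norm.continuousOn.mul hg.norm)
          · exact hg.norm.pow 2
        · exact measurableSet_Icc
        · intro x hx
          have h := heq x hx
          have h2 : deriv (deriv φ) x = (k:ℂ)^2 * φ x - g x := by linear_combination -h
          have hn : ‖deriv (deriv φ) x‖ ≤ k^2 * ‖φ x‖ + ‖g x‖ := by
            rw [h2]
            calc ‖(k:ℂ)^2 * φ x - g x‖ ≤ ‖(k:ℂ)^2 * φ x‖ + ‖g x‖ := norm_sub_le _ _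
              _ = k^2 * ‖φ x‖ + ‖g x‖ := by
                  rw [norm_mul]
                  congr 2
                  rw [norm_pow, Complex.norm_real, Real.norm_eq_abs, sq_abs]
          nlinarith [norm_nonneg (deriv (deriv φ) x), norm_nonneg (φ x), norm_nonneg (g x),
            sq_nonneg k]
      have hsplit : (∫ x in Set.Icc (-1:ℝ) 1,
          (k^4 * ‖φ x‖^2 + 2 * k^2 * (‖φ x‖ * ‖g x‖) + ‖g x‖^2))
          = k^4 * B + 2 * k^2 * (∫ x in Set.Icc (-1:ℝ) 1, ‖φ x‖ * ‖g x‖) + G := by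
        rw [integral_add, integral_add, integral_const_mul, integral_const_mul, hB, hG]
        · exact ((hcφ.norm.pow 2).integrableOn_Icc.const_mul _)
        · exact ((hcφ.norm.continuousOn.mul hg.norm).integrableOn_compact isCompact_Icc).const_mul _
        · exact (((hcφ.norm.pow 2).integrableOn_Icc.const_mul _).add
            (((hcφ.norm.continuousOn.mul hg.norm).integrableOn_compact isCompact_Icc).const_mul _))
        · exact (hg.norm.pow 2).integrableOn_compact isCompact_Icc
      have hcsφg : (∫ x in Set.Icc (-1:ℝ) 1, ‖φ x‖ * ‖g x‖) ≤ b * gn := by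
        rw [hb, hgn, hB, hG]
        exact cs_Icc _ _ hcφ.norm.continuousOn hg.norm
          (fun x _ => norm_nonneg _) (fun x _ => norm_nonneg _)
      calc C ≤ k^4 * B + 2 * k^2 * (∫ x in Set.Icc (-1:ℝ) 1, ‖φ x‖ * ‖g x‖) + G := by
              rw [← hsplit]; exact hmaj
        _ ≤ k^4 * B + 2 * k^2 * (b * gn) + G := by nlinarith [sq_nonneg k]
        _ = (k^2 * b + gn)^2 := by rw [← hb2', ← hgn2]; ring
    calc Real.sqrt C ≤ Real.sqrt ((k^2 * b + gn)^2) := Real.sqrt_le_sqrt hCb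
      _ = k^2 * b + gn := Real.sqrt_sq (by positivity)
  -- conclusion
  linarith [hsc, hka, hk2b]
end

section
/- Let k ∈ ℝ with |k| ≥ 1 and let φ, g : ℝ → ℂ with φ twice continuously differentiable and g continuous on [−1,1]. Assume −φ''(x) + k² φ(x) = g(x) for all x ∈ [−1,1], and φ'(−1) = φ'(1) = 0 (Neumann boundary conditions). Then ‖φ'‖_{L²(−1,1)} + |k| ‖φ‖_{L²(−1,1)} ≤ 2 ‖g‖_{L²(−1,1)}. -/
open MeasureTheory Real

/-- Elliptic estimate for the Neumann problem `−φ'' + k²φ = g` on `[−1,1]`,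
`φ'(±1) = 0`, in the case `|k| ≥ 1`:
`‖φ'‖_{L²(−1,1)} + |k| ‖φ‖_{L²(−1,1)} ≤ 2 ‖g‖_{L²(−1,1)}`. -/
theorem elliptic_neumann_estimate (k : ℝ) (hk : 1 ≤ |k|) (φ g : ℝ → ℂ)
    (hφ : ContDiff ℝ 2 φ) (hg : ContinuousOn g (Set.Icc (-1 : ℝ) 1))
    (heq : ∀ x ∈ Set.Icc (-1 : ℝ) 1,
      -(deriv (deriv φ) x) + ((k : ℂ) ^ 2) * φ x = g x)
    (hb1 : deriv φ (-1) = 0) (hb2 : deriv φ 1 = 0) :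
    Real.sqrt (∫ x in Set.Icc (-1 : ℝ) 1, ‖deriv φ x‖ ^ 2) +
        |k| * Real.sqrt (∫ x in Set.Icc (-1 : ℝ) 1, ‖φ x‖ ^ 2) ≤
      2 * Real.sqrt (∫ x in Set.Icc (-1 : ℝ) 1, ‖g x‖ ^ 2) := by
  have hle : (-1 : ℝ) ≤ 1 := by norm_num
  have huIcc : Set.uIcc (-1 : ℝ) 1 = Set.Icc (-1 : ℝ) 1 := Set.uIcc_of_le hle
  have hk2 : (1 : ℝ) ≤ k ^ 2 := by nlinarith [abs_nonneg k, sq_abs k]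
  have hk2pos : (0 : ℝ) < k ^ 2 := by linarith
  -- regularity
  have hφ1 : ContDiff ℝ 1 (deriv φ) := by
    have h : ContDiff ℝ ((1:ℕ)+1) φ := hφ.of_le (by norm_num)
    exact_mod_cast (contDiff_succ_iff_deriv.mp h).2.2
  have cφ : Continuous φ := hφ.continuous
  have cφ' : Continuous (deriv φ) := hφ1.continuous
  have cφ'' : Continuous (deriv (deriv φ)) := hφ1.continuous_deriv le_rfl
  have hφd : ∀ x : ℝ, HasDerivAt φ (deriv φ x) x := fun x =>
    ((hφ.differentiable (by norm_num)) x).hasDerivAt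
  have hφ'd : ∀ x : ℝ, HasDerivAt (deriv φ) (deriv (deriv φ) x) x := fun x =>
    ((hφ1.differentiable (by norm_num)) x).hasDerivAt
  -- abbreviations
  set A : ℝ := ∫ x in (-1 : ℝ)..1, ‖deriv φ x‖ ^ 2 with hA
  set B : ℝ := ∫ x in (-1 : ℝ)..1, ‖φ x‖ ^ 2 with hB
  set C : ℝ := ∫ x in (-1 : ℝ)..1, ‖g x‖ ^ 2 with hC
  have hIcc2int : ∀ f : ℝ → ℝ, (∫ x in Set.Icc (-1 : ℝ) 1, f x) = ∫ x in (-1 : ℝ)..1, f x := by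
    intro f
    rw [integral_Icc_eq_integral_Ioc, ← intervalIntegral.integral_of_le hle]
  have hA0 : 0 ≤ A := intervalIntegral.integral_nonneg hle (fun x _ => by positivity)
  have hB0 : 0 ≤ B := intervalIntegral.integral_nonneg hle (fun x _ => by positivity)
  have hC0 : 0 ≤ C := intervalIntegral.integral_nonneg hle (fun x _ => by positivity)
  -- integrability
  have hgi : IntervalIntegrable g volume (-1) 1 :=
    (huIcc ▸ hg : ContinuousOn g (Set.uIcc (-1:ℝ) 1)).intervalIntegrable
  -- integration by parts : ∫ conj φ * φ'' = - ∫ conj φ' * φ'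
  have hconj : ∀ x : ℝ, HasDerivAt (fun y => (starRingEnd ℂ) (φ y))
      ((starRingEnd ℂ) (deriv φ x)) x := fun x => (hφd x).star
  have hIBP : (∫ x in (-1 : ℝ)..1, (starRingEnd ℂ) (φ x) * deriv (deriv φ) x)
      = -(∫ x in (-1 : ℝ)..1, (starRingEnd ℂ) (deriv φ x) * deriv φ x) := by
    have := intervalIntegral.integral_mul_deriv_eq_deriv_mul
      (u := fun y => (starRingEnd ℂ) (φ y)) (v := deriv φ)
      (u' := fun y => (starRingEnd ℂ) (deriv φ y)) (v' := deriv (deriv φ))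
      (a := (-1 : ℝ)) (b := 1)
      (fun x _ => hconj x) (fun x _ => hφ'd x)
      ((Complex.continuous_conj.comp cφ').intervalIntegrable _ _)
      (cφ''.intervalIntegrable _ _)
    rw [this, hb1, hb2]
    ring
  -- conj z * z = ‖z‖²
  have hcz : ∀ z : ℂ, (starRingEnd ℂ) z * z = ((‖z‖ ^ 2 : ℝ) : ℂ) := by
    intro z
    rw [mul_comm, Complex.mul_conj]
    norm_cast
    simp [Complex.normSq_eq_norm_sq]
  -- key identity
  have hkey : (∫ x in (-1 : ℝ)..1, g x * (starRingEnd ℂ) (φ x)) = ((A + k ^ 2 * B : ℝ) : ℂ) := by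
    have h1 : (∫ x in (-1 : ℝ)..1, g x * (starRingEnd ℂ) (φ x))
        = ∫ x in (-1 : ℝ)..1,
          (-((starRingEnd ℂ) (φ x) * deriv (deriv φ) x)
            + (k : ℂ) ^ 2 * (φ x * (starRingEnd ℂ) (φ x))) := by
      apply intervalIntegral.integral_congr
      intro x hx
      rw [huIcc] at hx
      dsimp only
      rw [← heq x hx]
      ring
    have hint1 : IntervalIntegrable (fun x => (starRingEnd ℂ) (φ x) * deriv (deriv φ) x)
        volume (-1) 1 := ((Complex.continuous_conj.comp cφ).mul cφ'').intervalIntegrable _ _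
    have hint2 : IntervalIntegrable (fun x => φ x * (starRingEnd ℂ) (φ x))
        volume (-1) 1 := (cφ.mul (Complex.continuous_conj.comp cφ)).intervalIntegrable _ _
    have hint1n : IntervalIntegrable
        (fun x => -((starRingEnd ℂ) (φ x) * deriv (deriv φ) x)) volume (-1) 1 := hint1.neg
    have hint2c : IntervalIntegrable
        (fun x => (k : ℂ) ^ 2 * (φ x * (starRingEnd ℂ) (φ x))) volume (-1) 1 :=
      hint2.const_mul _
    rw [h1, intervalIntegral.integral_add hint1n hint2c,
      intervalIntegral.integral_neg, intervalIntegral.integral_const_mul, hIBP, neg_neg]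
    have e1 : (∫ x in (-1 : ℝ)..1, (starRingEnd ℂ) (deriv φ x) * deriv φ x) = ((A : ℝ) : ℂ) := by
      rw [hA]
      rw [← intervalIntegral.integral_ofReal]
      exact intervalIntegral.integral_congr fun x _ => hcz _
    have e2 : (∫ x in (-1 : ℝ)..1, φ x * (starRingEnd ℂ) (φ x)) = ((B : ℝ) : ℂ) := by
      rw [hB, ← intervalIntegral.integral_ofReal]
      refine intervalIntegral.integral_congr fun x _ => ?_
      rw [mul_comm]; exact hcz _
    rw [e1, e2]
    push_cast
    ring
  -- real-part bound
  have hre : A + k ^ 2 * B ≤ ∫ x in (-1 : ℝ)..1, ‖g x‖ * ‖φ x‖ := by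
    have h1 : A + k ^ 2 * B = (∫ x in (-1 : ℝ)..1, g x * (starRingEnd ℂ) (φ x)).re := by
      rw [hkey, Complex.ofReal_re]
    have h2 : (∫ x in (-1 : ℝ)..1, g x * (starRingEnd ℂ) (φ x)).re
        ≤ ‖∫ x in (-1 : ℝ)..1, g x * (starRingEnd ℂ) (φ x)‖ := Complex.re_le_norm _
    have h3 : ‖∫ x in (-1 : ℝ)..1, g x * (starRingEnd ℂ) (φ x)‖
        ≤ ∫ x in (-1 : ℝ)..1, ‖g x * (starRingEnd ℂ) (φ x)‖ :=
      intervalIntegral.norm_integral_le_integral_norm hle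
    have h4 : (∫ x in (-1 : ℝ)..1, ‖g x * (starRingEnd ℂ) (φ x)‖)
        = ∫ x in (-1 : ℝ)..1, ‖g x‖ * ‖φ x‖ := by
      refine intervalIntegral.integral_congr fun x _ => ?_
      rw [norm_mul, RCLike.norm_conj]
    rw [h1, ← h4]
    exact h2.trans h3
  -- pointwise AM-GM integrated
  have hCS : (∫ x in (-1 : ℝ)..1, ‖g x‖ * ‖φ x‖) ≤ C / (2 * k ^ 2) + k ^ 2 / 2 * B := by
    have hint1 : IntervalIntegrable (fun x => ‖g x‖ * ‖φ x‖) volume (-1) 1 := by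
      apply ContinuousOn.intervalIntegrable
      rw [huIcc]
      exact hg.norm.mul cφ.continuousOn.norm
    have hint2 : IntervalIntegrable
        (fun x => ‖g x‖ ^ 2 / (2 * k ^ 2) + k ^ 2 / 2 * ‖φ x‖ ^ 2) volume (-1) 1 := by
      apply ContinuousOn.intervalIntegrable
      rw [huIcc]
      exact ((hg.norm.pow 2).div_const _).add
        (continuousOn_const.mul (cφ.norm.pow 2).continuousOn)
    have hmono := intervalIntegral.integral_mono_on hle hint1 hint2 (fun x _ => by
      rw [← sub_nonneg]
      have e : ‖g x‖ ^ 2 / (2 * k ^ 2) + k ^ 2 / 2 * ‖φ x‖ ^ 2 - ‖g x‖ * ‖φ x‖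
          = (‖g x‖ - k ^ 2 * ‖φ x‖) ^ 2 / (2 * k ^ 2) := by
        have hk0 : k ≠ 0 := fun h => by simp [h] at hk2pos
        field_simp
        ring
      rw [e]
      positivity)
    have hsplit : (∫ x in (-1 : ℝ)..1, (‖g x‖ ^ 2 / (2 * k ^ 2) + k ^ 2 / 2 * ‖φ x‖ ^ 2))
        = C / (2 * k ^ 2) + k ^ 2 / 2 * B := by
      have i1 : IntervalIntegrable (fun x => ‖g x‖ ^ 2 / (2 * k ^ 2)) volume (-1) 1 := by
        apply ContinuousOn.intervalIntegrable
        rw [huIcc]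
        exact (hg.norm.pow 2).div_const _
      have i2 : IntervalIntegrable (fun x => k ^ 2 / 2 * ‖φ x‖ ^ 2) volume (-1) 1 :=
        (continuous_const.mul (cφ.norm.pow 2)).intervalIntegrable _ _
      rw [intervalIntegral.integral_add i1 i2, intervalIntegral.integral_div,
        intervalIntegral.integral_const_mul, hC, hB]
    rw [← hsplit]
    exact hmono
  -- combine
  have hmain : A + k ^ 2 / 2 * B ≤ C / (2 * k ^ 2) := by linarith
  have hmain' : (A + k ^ 2 / 2 * B) * (2 * k ^ 2) ≤ C := by
    rw [← le_div_iff₀ (by positivity)]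
    exact hmain
  have hAC : A ≤ C := by
    nlinarith [mul_nonneg hk2pos.le hB0, mul_nonneg hk2pos.le hA0,
      mul_nonneg (mul_nonneg hk2pos.le hk2pos.le) hB0,
      mul_nonneg (sub_nonneg.mpr hk2) hA0]
  have hBC : k ^ 2 * B ≤ C := by
    nlinarith [mul_nonneg (sub_nonneg.mpr hk2) (mul_nonneg hk2pos.le hB0), hA0,
      mul_nonneg hk2pos.le hA0]
  -- finish
  rw [hIcc2int, hIcc2int, hIcc2int, ← hA, ← hB, ← hC]
  have e1 : |k| * Real.sqrt B = Real.sqrt (k ^ 2 * B) := by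
    rw [Real.sqrt_mul (sq_nonneg k), Real.sqrt_sq_eq_abs]
  have l1 : Real.sqrt A ≤ Real.sqrt C := Real.sqrt_le_sqrt hAC
  have l2 : Real.sqrt (k ^ 2 * B) ≤ Real.sqrt C := Real.sqrt_le_sqrt hBC
  rw [e1]
  linarith
end
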